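/- arXiv:2111.12436 — 2 statements merged into one kernel-verified Lean document; each statement's English description precedes it below -/
import Mathlib

section
/- Fix q ∈ 𝔽₂^d \ ⋃ᵢ Pᵢ. If (a,b) with a ∈ Pᵢ, b ∈ Pⱼ (i ≠ j) satisfies a + b = q, then every other pair (c,d) from distinct parts with c + d = q must have c or d in Pᵢ ∪ Pⱼ. Consequently the number of such pairs summing to q is at most |Pᵢ| + |Pⱼ|. -/
open Finset

open scoped Classical in
/-- A partition-matroid reduction of the complete binary matroid `B_d` on `𝔽₂^d`:
pairwise disjoint parts `P i ⊆ 𝔽₂^d` such that every transversal (a set picking at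
most one element from each part) is linearly independent over `𝔽₂`. -/
def TransversalIndep {d : ℕ} (P : Fin d → Finset (Fin d → ZMod 2)) : Prop :=
  Pairwise (fun i j => Disjoint (P i) (P j)) ∧
  ∀ S : Finset (Fin d → ZMod 2),
    (∀ x ∈ S, ∃ i, x ∈ P i) → (∀ i, (S ∩ P i).card ≤ 1) →
    LinearIndependent (ZMod 2) (fun x : {x : Fin d → ZMod 2 // x ∈ S} => (x : Fin d → ZMod 2))

/-!
If `c, e` both lay outside `P i ∪ P j`, then `a, b, c, e` would be a transversal of four
parts with `a + b + c + e = q + q = 0`, contradicting its independence. So every pair summing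
to `q` has a coordinate in `P i ∪ P j`, and this coordinate determines the pair: the other one is
`q` minus it, and the ordering `k < l` of the parts excludes the swapped pair.
-/

theorem Prod.eq_or_eq_swap_of_add_eq {G : Type*} [AddCancelCommMonoid G] {p p' : G × G}
    (h : p.1 + p.2 = p'.1 + p'.2) {x : G} (hx : x = p.1 ∨ x = p.2) (hx' : x = p'.1 ∨ x = p'.2) :
    p = p' ∨ p = p'.swap := by
  obtain ⟨a, b⟩ := p
  obtain ⟨a', b'⟩ := p'
  simp only [Prod.mk.injEq, Prod.swap_prod_mk] at *
  rcases hx with rfl | rfl <;> rcases hx' with rfl | rfl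
  · exact .inl ⟨rfl, add_left_cancel h⟩
  · exact .inr ⟨rfl, add_left_cancel (h.trans (add_comm _ _))⟩
  · exact .inr ⟨add_right_cancel (h.trans (add_comm _ _)), rfl⟩
  · exact .inl ⟨add_right_cancel h, rfl⟩

theorem Finset.card_le_card_of_add_eq {G : Type*} [AddCancelCommMonoid G] [DecidableEq G]
    {T : Finset (G × G)} {s : Finset G} {q : G} (hsum : ∀ p ∈ T, p.1 + p.2 = q)
    (hswap : ∀ p ∈ T, p.swap ∉ T) (hs : ∀ p ∈ T, p.1 ∈ s ∨ p.2 ∈ s) :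
    #T ≤ #s := by
  let pick (p : G × G) : G := if p.1 ∈ s then p.1 else p.2
  have pick_mem : ∀ p ∈ T, pick p ∈ s := fun p hp => by
    unfold pick; split_ifs with h1
    exacts [h1, (hs p hp).resolve_left h1]
  have pick_eq (p : G × G) : pick p = p.1 ∨ pick p = p.2 := by
    unfold pick; split_ifs <;> simp
  refine card_le_card_of_injOn pick (fun p hp => pick_mem p hp) fun p hp p' hp' hpp' => ?_
  rcases Prod.eq_or_eq_swap_of_add_eq ((hsum p hp).trans (hsum p' hp').symm) (pick_eq p)
      (hpp' ▸ pick_eq p') with heq | hswapped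
  · exact heq
  · exact absurd (hswapped ▸ hp) (hswap p' hp')

namespace TransversalIndep

variable {d : ℕ} {P : Fin d → Finset (Fin d → ZMod 2)}

theorem eq_of_mem_of_mem (h : TransversalIndep P) {x : Fin d → ZMod 2} {m n : Fin d}
    (hm : x ∈ P m) (hn : x ∈ P n) : m = n := by
  by_contra hmn
  exact Finset.disjoint_left.mp (h.1 hmn) hm hn

theorem linearIndependent (h : TransversalIndep P) {ι : Type*} [Fintype ι] {f : ι → Fin d}
    (hf : f.Injective) {v : ι → Fin d → ZMod 2} (hv : ∀ k, v k ∈ P (f k)) :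
    LinearIndependent (ZMod 2) v := by
  classical
  have hvf : ∀ {k k'}, v k = v k' → k = k' := fun hkk' =>
    hf (h.eq_of_mem_of_mem (hv _) (hkk' ▸ hv _))
  have hS := h.2 (univ.image v) (by simpa using fun k => ⟨f k, hv k⟩) fun m => by
    refine card_le_one.mpr fun x hx y hy => ?_
    simp only [mem_inter, mem_image, mem_univ, true_and] at hx hy
    obtain ⟨⟨k, rfl⟩, hkm⟩ := hx
    obtain ⟨⟨k', rfl⟩, hk'm⟩ := hy
    rw [hf ((h.eq_of_mem_of_mem (hv k) hkm).trans (h.eq_of_mem_of_mem (hv k') hk'm).symm)]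
  exact hS.comp (fun k => ⟨v k, mem_image_of_mem v (mem_univ k)⟩)
    fun k k' hkk' => hvf (congrArg Subtype.val hkk')

theorem sum_ne_zero (h : TransversalIndep P) {ι : Type*} [Fintype ι] [Nonempty ι]
    {f : ι → Fin d} (hf : f.Injective) {v : ι → Fin d → ZMod 2} (hv : ∀ k, v k ∈ P (f k)) :
    ∑ k, v k ≠ 0 := fun hsum =>
  one_ne_zero (Fintype.linearIndependent_iff.mp (h.linearIndependent hf hv) 1
    (by simpa using hsum) (Classical.arbitrary ι))

theorem add_add_add_ne_zero (h : TransversalIndep P) {i j k l : Fin d} (hij : i ≠ j)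
    (hik : i ≠ k) (hil : i ≠ l) (hjk : j ≠ k) (hjl : j ≠ l) (hkl : k ≠ l)
    {a b c e : Fin d → ZMod 2} (ha : a ∈ P i) (hb : b ∈ P j) (hc : c ∈ P k) (he : e ∈ P l) :
    a + b + c + e ≠ 0 := by
  have hf : Function.Injective ![i, j, k, l] := by
    intro x y hxy
    fin_cases x <;> fin_cases y <;> simp_all [eq_comm]
  have := h.sum_ne_zero hf (v := ![a, b, c, e]) (fun x => by fin_cases x <;> assumption)
  simpa [Fin.sum_univ_four] using this

theorem mem_union_or_mem_union (h : TransversalIndep P) {i j k l : Fin d} (hij : i ≠ j)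
    (hkl : k ≠ l) {a b c e : Fin d → ZMod 2} (ha : a ∈ P i) (hb : b ∈ P j) (hc : c ∈ P k)
    (he : e ∈ P l) (hsum : a + b = c + e) : c ∈ P i ∪ P j ∨ e ∈ P i ∪ P j := by
  by_contra! ⟨hc', he'⟩
  have hki : k ≠ i := fun hki => hc' (mem_union_left _ (hki ▸ hc))
  have hkj : k ≠ j := fun hkj => hc' (mem_union_right _ (hkj ▸ hc))
  have hli : l ≠ i := fun hli => he' (mem_union_left _ (hli ▸ he))
  have hlj : l ≠ j := fun hlj => he' (mem_union_right _ (hlj ▸ he))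
  refine h.add_add_add_ne_zero hij hki.symm hli.symm hkj.symm hlj.symm hkl ha hb hc he ?_
  rw [hsum, add_assoc]
  exact funext fun x => CharTwo.add_self_eq_zero ((c + e) x)

end TransversalIndep

open scoped Classical in
theorem stmt3_general {d : ℕ} (P : Fin d → Finset (Fin d → ZMod 2)) (h : TransversalIndep P)
    (q : Fin d → ZMod 2) {i j : Fin d} (hij : i ≠ j)
    {a b : Fin d → ZMod 2} (ha : a ∈ P i) (hb : b ∈ P j) (hab : a + b = q) :
    (∀ c e : Fin d → ZMod 2, ∀ k l : Fin d, k ≠ l → c ∈ P k → e ∈ P l → c + e = q →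
      (c ∈ P i ∪ P j ∨ e ∈ P i ∪ P j)) ∧
    ((Finset.univ ×ˢ Finset.univ).filter (fun p : (Fin d → ZMod 2) × (Fin d → ZMod 2) =>
        ∃ k l : Fin d, k < l ∧ p.1 ∈ P k ∧ p.2 ∈ P l ∧ p.1 + p.2 = q)).card
      ≤ (P i).card + (P j).card := by
  have hunion : ∀ c e : Fin d → ZMod 2, ∀ k l : Fin d, k ≠ l → c ∈ P k → e ∈ P l → c + e = q →
      (c ∈ P i ∪ P j ∨ e ∈ P i ∪ P j) := fun c e k l hkl hc he hce =>
    h.mem_union_or_mem_union hij hkl ha hb hc he (hab.trans hce.symm)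
  refine ⟨hunion, (card_le_card_of_add_eq (q := q) ?_ ?_ ?_).trans (card_union_le _ _)⟩
  · simp only [mem_filter]
    rintro p ⟨-, -, -, -, -, -, hq⟩
    exact hq
  · simp only [mem_filter, Prod.fst_swap, Prod.snd_swap]
    rintro p ⟨-, k, l, hkl, h1, h2, -⟩ ⟨-, k', l', hkl', h2', h1', -⟩
    rw [h.eq_of_mem_of_mem h1 h1', h.eq_of_mem_of_mem h2 h2'] at hkl
    exact lt_asymm hkl hkl'
  · simp only [mem_filter]
    rintro p ⟨-, k, l, hkl, hk, hl, hq⟩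
    exact hunion _ _ k l hkl.ne hk hl hq

open scoped Classical in
theorem stmt3 {d : ℕ} (P : Fin d → Finset (Fin d → ZMod 2)) (h : TransversalIndep P)
    (q : Fin d → ZMod 2) (hq : ∀ k, q ∉ P k) {i j : Fin d} (hij : i ≠ j)
    {a b : Fin d → ZMod 2} (ha : a ∈ P i) (hb : b ∈ P j) (hab : a + b = q) :
    (∀ c e : Fin d → ZMod 2, ∀ k l : Fin d, k ≠ l → c ∈ P k → e ∈ P l → c + e = q →
      (c ∈ P i ∪ P j ∨ e ∈ P i ∪ P j)) ∧
    ((Finset.univ ×ˢ Finset.univ).filter (fun p : (Fin d → ZMod 2) × (Fin d → ZMod 2) =>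
        ∃ k l : Fin d, k < l ∧ p.1 ∈ P k ∧ p.2 ∈ P l ∧ p.1 + p.2 = q)).card
      ≤ (P i).card + (P j).card :=
  stmt3_general P h q hij ha hb hab
end

section
/- Let P₁,…,P_d be a partition matroid reduction of B_d with ∑ᵢ|Pᵢ| ≥ 2^d/d^{1/4}. Then maxᵢ |Pᵢ| ≥ 2^d/(8√d). -/
/-! Let `A` be the union of the parts and `m` the largest part size. If `x + y = x' + y'` with
`x, y, x', y'` in four distinct parts, these four vectors form a dependent transversal; so the
pairs `(x, y) ∈ A × A` from different parts with a fixed sum `s` all meet the two parts of any one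
of them, and there are at most `4m` of them. Summing over the `2^d` values of `s` and adding the
at most `m |A|` pairs inside a part gives `|A|² ≤ 5 m 2^d`, which with `|A| ≥ 2^d / d^{1/4}` yields
`m ≥ 2^d / (5 √d)`. -/

open Finset

open Function

theorem add_ne_add_of_linearIndependent {K V : Type*} [Ring K] [Nontrivial K] [AddCommGroup V]
    [Module K V] {x y x' y' : V} (h : LinearIndependent K ![x, y, x', y']) :
    x + y ≠ x' + y' := by
  intro e
  have := Fintype.linearIndependent_iff.1 h ![1, 1, -1, -1] (by simp [Fin.sum_univ_four, e]) 0
  simp at this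

section CrossPairs

variable {ι V : Type*} [Fintype ι] [DecidableEq V] (P : ι → Finset V)

def CrossSumFree [Add V] : Prop :=
  ∀ ⦃i j a b : ι⦄ ⦃x y x' y' : V⦄, [i, j, a, b].Nodup →
    x ∈ P i → y ∈ P j → x' ∈ P a → y' ∈ P b → x + y ≠ x' + y'

def crossPairs : Finset (V × V) := univ.offDiag.biUnion fun ij => P ij.1 ×ˢ P ij.2

variable {P}

theorem mem_crossPairs {p : V × V} :
    p ∈ crossPairs P ↔ ∃ i j, i ≠ j ∧ p.1 ∈ P i ∧ p.2 ∈ P j := by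
  simp [crossPairs]

theorem sq_card_biUnion_le_card_crossPairs_add (m : ℕ) (hm : ∀ i, #(P i) ≤ m) :
    #(univ.biUnion P) ^ 2 ≤ #(crossPairs P) + m * ∑ i, #(P i) := by
  set A := univ.biUnion P
  have hsplit : A ×ˢ A ⊆ crossPairs P ∪ univ.biUnion fun i => P i ×ˢ P i := by
    rintro ⟨x, y⟩ hxy
    obtain ⟨⟨i, -, hx⟩, ⟨j, -, hy⟩⟩ : (∃ i ∈ univ, x ∈ P i) ∧ ∃ j ∈ univ, y ∈ P j := by
      simpa [A] using hxy
    rcases eq_or_ne i j with rfl | hij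
    · exact mem_union_right _ (mem_biUnion.2 ⟨i, mem_univ _, mem_product.2 ⟨hx, hy⟩⟩)
    · exact mem_union_left _ (mem_crossPairs.2 ⟨i, j, hij, hx, hy⟩)
  calc #A ^ 2 = #(A ×ˢ A) := by rw [card_product, sq]
    _ ≤ #(crossPairs P) + #(univ.biUnion fun i => P i ×ˢ P i) :=
      (card_le_card hsplit).trans (card_union_le _ _)
    _ ≤ #(crossPairs P) + ∑ i, #(P i) * #(P i) := by
      gcongr
      simpa only [card_product] using card_biUnion_le (s := univ) (t := fun i => P i ×ˢ P i)
    _ ≤ #(crossPairs P) + m * ∑ i, #(P i) := by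
      rw [mul_sum]
      gcongr with i
      exact hm i

theorem card_filter_crossPairs_add_eq_le [AddCommGroup V] (hP : CrossSumFree P) (m : ℕ)
    (hm : ∀ i, #(P i) ≤ m) (s : V) : #((crossPairs P).filter fun p => p.1 + p.2 = s) ≤ 4 * m := by
  set F := (crossPairs P).filter fun p => p.1 + p.2 = s
  obtain hF | ⟨p₀, hp₀⟩ := F.eq_empty_or_nonempty
  · simp [hF]
  obtain ⟨hp₀, hs₀⟩ := mem_filter.1 hp₀
  obtain ⟨a, b, hab, hx₀, hy₀⟩ := mem_crossPairs.1 hp₀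
  set Q := P a ∪ P b
  have hQ : #Q ≤ 2 * m := (card_union_le _ _).trans (by linarith [hm a, hm b])
  -- a pair in the fibre avoiding `P a ∪ P b` would give a relation between four distinct parts
  have hmeets : ∀ p ∈ F, p.1 ∈ Q ∨ p.2 ∈ Q := by
    intro p hp
    obtain ⟨hp, hs⟩ := mem_filter.1 hp
    obtain ⟨i, j, hij, hx, hy⟩ := mem_crossPairs.1 hp
    by_contra! hout
    simp only [Q, mem_union, not_or] at hout
    obtain ⟨⟨hxa, hxb⟩, hya, hyb⟩ := hout
    have hnodup : [i, j, a, b].Nodup := by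
      simp only [List.nodup_cons, List.mem_cons, List.not_mem_nil, List.nodup_nil]
      refine ⟨?_, ?_, ?_⟩ <;> aesop
    exact hP hnodup hx hy hx₀ hy₀ (hs.trans hs₀.symm)
  have hinj : Set.InjOn Prod.fst (F : Set (V × V)) := fun p hp q hq hpq => by
    have hsum : p.1 + p.2 = q.1 + q.2 := (mem_filter.1 hp).2.trans (mem_filter.1 hq).2.symm
    rw [hpq] at hsum
    exact Prod.ext hpq (add_left_cancel hsum)
  have himage : F.image Prod.fst ⊆ Q ∪ Q.image (s - ·) := by
    simp only [subset_iff, mem_image]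
    rintro _ ⟨p, hp, rfl⟩
    rcases hmeets p hp with h | h
    · exact mem_union_left _ h
    · refine mem_union_right _ (mem_image.2 ⟨p.2, h, ?_⟩)
      rw [← (mem_filter.1 hp).2, add_sub_cancel_right]
  calc #F = #(F.image Prod.fst) := (card_image_of_injOn hinj).symm
    _ ≤ #(Q ∪ Q.image (s - ·)) := card_le_card himage
    _ ≤ #Q + #Q := (card_union_le _ _).trans (add_le_add_right card_image_le _)
    _ ≤ 4 * m := by omega

theorem card_crossPairs_le [AddCommGroup V] [Fintype V] (hP : CrossSumFree P) (m : ℕ)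
    (hm : ∀ i, #(P i) ≤ m) :
    #(crossPairs P) ≤ 4 * m * Fintype.card V := by
  calc #(crossPairs P) = ∑ s, #((crossPairs P).filter fun p => p.1 + p.2 = s) :=
        card_eq_sum_card_fiberwise fun _ _ => mem_univ _
    _ ≤ ∑ _s : V, 4 * m := sum_le_sum fun s _ => card_filter_crossPairs_add_eq_le hP m hm s
    _ = 4 * m * Fintype.card V := by rw [sum_const, card_univ, smul_eq_mul, mul_comm]

theorem sq_sum_card_le [AddCommGroup V] [Fintype V] (hdisj : Pairwise (Disjoint on P))
    (hP : CrossSumFree P) (m : ℕ) (hm : ∀ i, #(P i) ≤ m) :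
    (∑ i, #(P i)) ^ 2 ≤ 5 * m * Fintype.card V := by
  have hunion : #(univ.biUnion P) = ∑ i, #(P i) := card_biUnion fun i _ j _ hij => hdisj hij
  have hS : ∑ i, #(P i) ≤ Fintype.card V := hunion ▸ card_le_univ _
  calc (∑ i, #(P i)) ^ 2 ≤ #(crossPairs P) + m * ∑ i, #(P i) :=
        hunion ▸ sq_card_biUnion_le_card_crossPairs_add m hm
    _ ≤ 4 * m * Fintype.card V + m * Fintype.card V :=
      add_le_add (card_crossPairs_le hP m hm) (Nat.mul_le_mul_left m hS)
    _ = 5 * m * Fintype.card V := by ring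

end CrossPairs

namespace TransversalIndep

variable {d : ℕ} {P : Fin d → Finset (Fin d → ZMod 2)}

theorem eq_of_mem (h : TransversalIndep P) {x : Fin d → ZMod 2} {i j : Fin d} (hi : x ∈ P i)
    (hj : x ∈ P j) : i = j := by
  by_contra hij
  exact disjoint_left.1 (h.1 hij) hi hj

theorem linearIndependent_s18 (h : TransversalIndep P) {κ : Type*} [Fintype κ] {t : κ → Fin d}
    (ht : Injective t) {u : κ → Fin d → ZMod 2} (hu : ∀ k, u k ∈ P (t k)) : LinearIndependent (ZMod 2) u := by
  classical
  have hinj : Injective u := fun k l hkl => ht (h.eq_of_mem (hu k) (hkl ▸ hu l))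
  have hS := h.2 (univ.image u) (by simp only [mem_image]; rintro _ ⟨k, -, rfl⟩; exact ⟨_, hu k⟩)
    (fun m => card_le_one.2 fun v hv w hw => by
      simp only [mem_inter, mem_image, mem_univ, true_and] at hv hw
      obtain ⟨⟨k, rfl⟩, hkm⟩ := hv
      obtain ⟨⟨l, rfl⟩, hlm⟩ := hw
      rw [ht ((h.eq_of_mem (hu k) hkm).trans (h.eq_of_mem (hu l) hlm).symm)])
  exact hS.comp (fun k => ⟨u k, mem_image_of_mem _ (mem_univ k)⟩) fun k l hkl =>
    hinj (congrArg Subtype.val hkl)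

theorem crossSumFree (h : TransversalIndep P) : CrossSumFree P :=
  fun _ _ _ _ _ _ _ _ hnodup hx hy hx' hy' => add_ne_add_of_linearIndependent <| h.linearIndependent_s18 (List.nodup_ofFn.1 hnodup)
    (t := ![_, _, _, _]) fun k => by fin_cases k <;> assumption

end TransversalIndep

theorem le_of_div_le_of_sq_le {N S m r c : ℝ} (hN : 0 < N) (hr : 0 < r) (hc : 0 < c)
    (hS : N / r ≤ S) (hsq : S ^ 2 ≤ c * m * N) : N / (c * r ^ 2) ≤ m := by
  have : (N / r) ^ 2 ≤ c * m * N := (pow_le_pow_left₀ (by positivity) hS 2).trans hsq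
  rw [div_pow, div_le_iff₀ (by positivity)] at this
  rw [div_le_iff₀ (by positivity)]
  nlinarith

theorem stmt18 {d : ℕ} (hd : 1 ≤ d) (P : Fin d → Finset (Fin d → ZMod 2))
    (h : TransversalIndep P)
    (hbig : ((∑ i, (P i).card : ℕ) : ℝ) ≥ 2 ^ d / (d : ℝ) ^ ((1 : ℝ) / 4)) :
    ∃ i, ((P i).card : ℝ) ≥ 2 ^ d / (8 * Real.sqrt d) := by
  classical
  obtain ⟨i, -, hmax⟩ := exists_max_image univ (fun i => #(P i)) ⟨⟨0, hd⟩, mem_univ _⟩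
  have hsq := sq_sum_card_le h.1 h.crossSumFree _ fun j => hmax j (mem_univ j)
  rw [Fintype.card_fun, ZMod.card, Fintype.card_fin] at hsq
  have hdpos : (0 : ℝ) < d := by exact_mod_cast hd
  have hfourth : ((d : ℝ) ^ ((1 : ℝ) / 4)) ^ 2 = Real.sqrt d := by
    rw [← Real.rpow_natCast, ← Real.rpow_mul hdpos.le, Real.sqrt_eq_rpow]
    norm_num
  refine ⟨i, ?_⟩
  rw [ge_iff_le, ← hfourth]
  calc (2 : ℝ) ^ d / (8 * ((d : ℝ) ^ ((1 : ℝ) / 4)) ^ 2)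
      ≤ 2 ^ d / (5 * ((d : ℝ) ^ ((1 : ℝ) / 4)) ^ 2) := by gcongr; norm_num
    _ ≤ (#(P i) : ℝ) :=
      le_of_div_le_of_sq_le (by positivity) (by positivity) (by norm_num) hbig
        (by exact_mod_cast hsq)
end
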